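/- Let N = 1, α ∈ (0,1)ⁿ, c ∈ ℝ, and consider the functional 𝒥[u] = ∫_{Δ_n} F(t, ∇_{B_P}^α u(t)) dt with F ∈ C². Then 𝒥 is invariant under the ε-parameter family of transformations ū_ε(t) = u(t) + εc (i.e., ∫_{Δ_n*} F(t, ∇_{B_P}^α ū_ε) dt = ∫_{Δ_n*} F(t, ∇_{B_P}^α u) dt for every ε and every subbox Δ_n* ⊆ Δ_n), and along any extremal u of 𝒥 (i.e., any admissible u satisfying the Euler–Lagrange system Σ_{i=1}^n A_{P_{t_i}*}^{α_i}(∂_{n+i}F(t, ∇_{B_P}^α u(t))) = 0 on Δ_n) one has Σ_{i=1}^n D_{P_{t_i}}^{α_i}[c, ∂_{n+i}F(t, ∇_{B_P}^α u(t))] = 0 for all t ∈ Δ_n, where ∂_{n+i}F denotes the partial derivative of F with respect to its (n+i)-th argument. -/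

import Mathlib

open MeasureTheory

/-- The open box `Δ_n = (a_1,b_1) × ⋯ × (a_n,b_n) ⊂ ℝⁿ`. -/
def box (n : ℕ) (a b : Fin n → ℝ) : Set (Fin n → ℝ) :=
  Set.univ.pi fun i => Set.Ioo (a i) (b i)

/-- The closed box `Δ̄_n = [a_1,b_1] × ⋯ × [a_n,b_n]`. -/
def closedBox (n : ℕ) (a b : Fin n → ℝ) : Set (Fin n → ℝ) :=
  Set.univ.pi fun i => Set.Icc (a i) (b i)

/-- The boundary `∂Δ_n` of the box. -/
def boundaryBox (n : ℕ) (a b : Fin n → ℝ) : Set (Fin n → ℝ) :=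
  closedBox n a b \ box n a b

/-- The generalized partial fractional integral `K_{P_{t_i}}^{α}` of order `α`
(with kernel `k = k_α`) and parameter set `P_{t_i} = ⟨a_i, t_i, b_i, p, q⟩`:
`(K f)(t) = p ∫_{a_i}^{t_i} k(t_i−τ) f(…,τ,…) dτ + q ∫_{t_i}^{b_i} k(τ−t_i) f(…,τ,…) dτ`. -/
noncomputable def partK (n : ℕ) (a b : Fin n → ℝ) (i : Fin n) (p q : ℝ) (k : ℝ → ℝ)
    (f : (Fin n → ℝ) → ℝ) (t : Fin n → ℝ) : ℝ :=
  p * ∫ τ in (a i)..(t i), k (t i - τ) * f (Function.update t i τ) +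
  q * ∫ τ in (t i)..(b i), k (τ - t i) * f (Function.update t i τ)

/-- Partial derivative `∂f/∂t_i`. -/
noncomputable def pderiv (n : ℕ) (i : Fin n) (f : (Fin n → ℝ) → ℝ) (t : Fin n → ℝ) : ℝ :=
  deriv (fun s => f (Function.update t i s)) (t i)

/-- The generalized partial Riemann–Liouville fractional derivative
`A_{P_{t_i}}^{α} f = ∂/∂t_i (K_{P_{t_i}}^{1−α} f)`, where `k` is the kernel `k_{1−α}`. -/
noncomputable def partA (n : ℕ) (a b : Fin n → ℝ) (i : Fin n) (p q : ℝ) (k : ℝ → ℝ)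
    (f : (Fin n → ℝ) → ℝ) (t : Fin n → ℝ) : ℝ :=
  pderiv n i (partK n a b i p q k f) t

/-- The generalized partial Caputo fractional derivative
`B_{P_{t_i}}^{α} f = K_{P_{t_i}}^{1−α} (∂f/∂t_i)`, where `k` is the kernel `k_{1−α}`. -/
noncomputable def partB (n : ℕ) (a b : Fin n → ℝ) (i : Fin n) (p q : ℝ) (k : ℝ → ℝ)
    (f : (Fin n → ℝ) → ℝ) (t : Fin n → ℝ) : ℝ :=
  partK n a b i p q k (pderiv n i f) t

/-- `∂_{n+i}F`: partial derivative of the Lagrangian `F(t, G)` with respect to the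
`i`-th component of its second (gradient) argument. -/
noncomputable def dF (n : ℕ) (F : (Fin n → ℝ) → (Fin n → ℝ) → ℝ)
    (i : Fin n) (t : Fin n → ℝ) (G : Fin n → ℝ) : ℝ :=
  deriv (fun y => F t (Function.update G i y)) (G i)

/-- The generalized fractional gradient `∇_{B_P}^α w (t) = (B_{P_{t_i}}^{α_i} w (t))_i`
of a scalar function; `kk i` is the kernel `k_{1−α_i}`. -/
noncomputable def gradB (n : ℕ) (a b : Fin n → ℝ) (p q : Fin n → ℝ) (kk : Fin n → ℝ → ℝ)
    (w : (Fin n → ℝ) → ℝ) (t : Fin n → ℝ) : Fin n → ℝ :=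
  fun i => partB n a b i (p i) (q i) (kk i) w t

/-- The bilinear operator `D_{P_{t_i}}^{α_i}[f,g] = f ⋅ A_{P_{t_i}*}^{α_i} g
+ g ⋅ B_{P_{t_i}}^{α_i} f`; `kk` is the kernel `k_{1−α_i}`. -/
noncomputable def Dop (n : ℕ) (a b : Fin n → ℝ) (i : Fin n) (p q : ℝ) (kk : ℝ → ℝ)
    (f g : (Fin n → ℝ) → ℝ) (t : Fin n → ℝ) : ℝ :=
  f t * partA n a b i q p kk g t + g t * partB n a b i p q kk f t

/-! Translating `u` by a constant changes none of its partial derivatives, hence neither its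
Caputo gradient nor the Lagrangian. The Caputo derivative of the constant `c` vanishes, so
`D[c, g] = c · A* g` and the Noether sum is `c` times the Euler–Lagrange expression. -/

lemma pderiv_add_const (n : ℕ) (i : Fin n) (f : (Fin n → ℝ) → ℝ) (d : ℝ) :
    pderiv n i (fun s => f s + d) = pderiv n i f := by
  funext t
  simp [pderiv]

lemma pderiv_const (n : ℕ) (i : Fin n) (d : ℝ) :
    pderiv n i (fun _ : Fin n → ℝ => d) = fun _ => 0 := by
  funext t
  simp [pderiv]

lemma partK_zero (n : ℕ) (a b : Fin n → ℝ) (i : Fin n) (p q : ℝ) (k : ℝ → ℝ) :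
    partK n a b i p q k (fun _ => 0) = fun _ => 0 := by
  funext t
  simp [partK]

lemma partB_add_const (n : ℕ) (a b : Fin n → ℝ) (i : Fin n) (p q : ℝ) (k : ℝ → ℝ)
    (f : (Fin n → ℝ) → ℝ) (d : ℝ) :
    partB n a b i p q k (fun s => f s + d) = partB n a b i p q k f := by
  funext t
  rw [partB, pderiv_add_const, partB]

lemma partB_const (n : ℕ) (a b : Fin n → ℝ) (i : Fin n) (p q : ℝ) (k : ℝ → ℝ) (d : ℝ) :
    partB n a b i p q k (fun _ => d) = fun _ => 0 := by
  funext t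
  rw [partB, pderiv_const, partK_zero]

lemma gradB_add_const (n : ℕ) (a b p q : Fin n → ℝ) (kk : Fin n → ℝ → ℝ)
    (w : (Fin n → ℝ) → ℝ) (d : ℝ) :
    gradB n a b p q kk (fun s => w s + d) = gradB n a b p q kk w := by
  funext t i
  simp only [gradB, partB_add_const]

lemma Dop_const_left (n : ℕ) (a b : Fin n → ℝ) (i : Fin n) (p q : ℝ) (k : ℝ → ℝ)
    (c : ℝ) (g : (Fin n → ℝ) → ℝ) (t : Fin n → ℝ) :
    Dop n a b i p q k (fun _ => c) g t = c * partA n a b i q p k g t := by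
  rw [Dop, partB_const, mul_zero, add_zero]

theorem noether_example_translations_general
    (n : ℕ) (a b : Fin n → ℝ)
    (c : ℝ) (p q : Fin n → ℝ)
    (kk : Fin n → ℝ → ℝ)
    (F : (Fin n → ℝ) → (Fin n → ℝ) → ℝ)
    (u : (Fin n → ℝ) → ℝ) :
    -- 𝒥 is invariant under the ε-parameter family ū_ε = u + εc
    (∀ ε : ℝ, ∀ a' b' : Fin n → ℝ, box n a' b' ⊆ box n a b →
      (∫ t in box n a' b',
        F t (gradB n a b p q kk (fun s => u s + ε * c) t)) =
      ∫ t in box n a' b', F t (gradB n a b p q kk u t)) ∧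
    -- and along any extremal of 𝒥 the Noether identity holds
    ((∀ t ∈ box n a b,
        (∑ i : Fin n,
          partA n a b i (q i) (p i) (kk i)
            (fun s => dF n F i s (gradB n a b p q kk u s)) t) = 0) →
      ∀ t ∈ box n a b,
        (∑ i : Fin n,
          Dop n a b i (p i) (q i) (kk i)
            (fun _ => c)
            (fun s => dF n F i s (gradB n a b p q kk u s)) t) = 0) := by
  refine ⟨fun ε _ _ _ => by rw [gradB_add_const], fun hEL t ht => ?_⟩
  simp only [Dop_const_left, ← Finset.mul_sum, hEL t ht, mul_zero]

/-- Example (Noether's theorem for `𝒥[u] = ∫_{Δ_n} F(t, ∇_{B_P}^α u) dt` and the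
translations `ū_ε = u + εc`): the functional is invariant under this family of
transformations, and along any extremal `u` one has
`Σ_i D_{P_{t_i}}^{α_i}[c, ∂_{n+i}F(t, ∇_{B_P}^α u(t))] = 0` on `Δ_n`.
Here `kk i` is the kernel `k_{1−α_i}`. -/
theorem noether_example_translations
    (n : ℕ) (a b : Fin n → ℝ) (hab : ∀ j, a j < b j)
    (α : Fin n → ℝ) (hα : ∀ i, 0 < α i ∧ α i < 1)
    (c : ℝ) (p q : Fin n → ℝ)
    (kk : Fin n → ℝ → ℝ) (hkk : ∀ i, IntegrableOn (kk i) (Set.Ioo 0 (b i - a i)))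
    (F : (Fin n → ℝ) → (Fin n → ℝ) → ℝ)
    (hF : ContDiff ℝ 2 (fun x : (Fin n → ℝ) × (Fin n → ℝ) => F x.1 x.2))
    (u : (Fin n → ℝ) → ℝ)
    -- admissibility of u
    (hu : ContDiffOn ℝ 1 u (closedBox n a b))
    (huB : ∀ i, ContinuousOn (partB n a b i (p i) (q i) (kk i) u) (closedBox n a b)) :
    -- 𝒥 is invariant under the ε-parameter family ū_ε = u + εc
    (∀ ε : ℝ, ∀ a' b' : Fin n → ℝ, box n a' b' ⊆ box n a b →
      (∫ t in box n a' b',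
        F t (gradB n a b p q kk (fun s => u s + ε * c) t)) =
      ∫ t in box n a' b', F t (gradB n a b p q kk u t)) ∧
    -- and along any extremal of 𝒥 the Noether identity holds
    ((∀ t ∈ box n a b,
        (∑ i : Fin n,
          partA n a b i (q i) (p i) (kk i)
            (fun s => dF n F i s (gradB n a b p q kk u s)) t) = 0) →
      ∀ t ∈ box n a b,
        (∑ i : Fin n,
          Dop n a b i (p i) (q i) (kk i)
            (fun _ => c)
            (fun s => dF n F i s (gradB n a b p q kk u s)) t) = 0) :=
  noether_example_translations_general n a b c p q kk F u
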